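/- arXiv:1010.2032 — 4 statements merged into one kernel-verified Lean document; each statement's English description precedes it below -/
import Mathlib

section
/- The cardinality of Σ(·) is monotone: for all 0 < ε ≤ ε' ≤ R, both Σ(ε) and Σ(ε') are finite and #Σ(ε') ≤ #Σ(ε). -/
open Set

/-- The contraction ratio `r_ω` of a finite word `ω` over the alphabet `Fin N`. -/
def rword {N : ℕ} (r : Fin N → ℝ) (ω : List (Fin N)) : ℝ := (ω.map r).prod

/-- The family `Σ(ε)` of all nonempty words `ω` with `R r_ω < ε ≤ R r_{ω|(|ω|-1)}`. -/
def SigmaW {N : ℕ} (r : Fin N → ℝ) (R ε : ℝ) : Set (List (Fin N)) :=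
  {ω | ω ≠ [] ∧ R * rword r ω < ε ∧ ε ≤ R * rword r (ω.take (ω.length - 1))}

/-! A prefix-free family of words each of which extends to a word of a finite family `T`
injects into `T`: two words with a common extension are comparable, hence equal. The family
`Σ(ε')` is prefix-free, and each of its words is extended to a word of `Σ(ε)` by appending one
letter until the ratio drops below `ε / R`. -/

theorem List.ncard_le_ncard_of_prefixFree {α : Type*} {S T : Set (List α)} (hT : T.Finite)
    (hS : ∀ u ∈ S, ∀ v ∈ S, u <+: v → u = v) (hST : ∀ u ∈ S, ∃ v ∈ T, u <+: v) :
    S.ncard ≤ T.ncard := by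
  choose! f hfT hf using hST
  refine Set.ncard_le_ncard_of_injOn f hfT (fun u hu v hv huv => ?_) hT
  rcases List.prefix_or_prefix_of_prefix (hf u hu) (huv ▸ hf v hv) with h | h
  · exact hS u hu v hv h
  · exact (hS v hv u hu h).symm

section rword

variable {N : ℕ} {r : Fin N → ℝ}

theorem rword_append (r : Fin N → ℝ) (u v : List (Fin N)) :
    rword r (u ++ v) = rword r u * rword r v := by
  simp [rword]

theorem rword_replicate (r : Fin N → ℝ) (m : ℕ) (i : Fin N) :
    rword r (List.replicate m i) = r i ^ m := by
  simp [rword]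

theorem rword_pos (hr : ∀ i, 0 < r i) (ω : List (Fin N)) : 0 < rword r ω :=
  List.prod_pos (by simpa using fun i _ => hr i)

theorem rword_le_pow_length (hr : ∀ i, 0 ≤ r i) {ρ : ℝ} (hρ : ∀ i, r i ≤ ρ)
    (ω : List (Fin N)) : rword r ω ≤ ρ ^ ω.length := by
  simpa [rword] using
    List.prod_map_le_prod_map₀ r (fun _ => ρ) (fun i _ => hr i) (fun i _ => hρ i)

theorem rword_append_le (hr : ∀ i, r i ∈ Icc (0 : ℝ) 1) (u v : List (Fin N)) :
    rword r (u ++ v) ≤ rword r u := by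
  rw [rword_append]
  refine mul_le_of_le_one_right (List.prod_nonneg (by simpa using fun i _ => (hr i).1)) ?_
  simpa using rword_le_pow_length (fun i => (hr i).1) (fun i => (hr i).2) v

end rword

section SigmaW

variable {N : ℕ} {r : Fin N → ℝ} {R ε : ℝ}

theorem mem_sigmaW_iff {ω : List (Fin N)} :
    ω ∈ SigmaW r R ε ↔ ω ≠ [] ∧ R * rword r ω < ε ∧ ε ≤ R * rword r ω.dropLast := by
  rw [List.dropLast_eq_take]
  rfl

theorem sigmaW_finite [NeZero N] (hr : ∀ i, r i ∈ Ioo (0 : ℝ) 1) (hR : 0 < R) (hε : 0 < ε) :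
    (SigmaW r R ε).Finite := by
  obtain ⟨i₀, hi₀⟩ := Finite.exists_max r
  obtain ⟨L, hL⟩ := exists_pow_lt_of_lt_one (div_pos hε hR) (hr i₀).2
  refine (List.finite_length_le (Fin N) L).subset fun ω hω => ?_
  obtain ⟨-, -, hge⟩ := mem_sigmaW_iff.mp hω
  have hbound : ε / R ≤ r i₀ ^ (ω.length - 1) := by
    rw [div_le_iff₀' hR, ← List.length_dropLast]
    exact hge.trans (mul_le_mul_of_nonneg_left
      (rword_le_pow_length (fun i => (hr i).1.le) hi₀ _) hR.le)
  have := (pow_lt_pow_iff_right_of_lt_one₀ (hr i₀).1 (hr i₀).2).mp (hL.trans_le hbound)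
  change ω.length ≤ L
  omega

theorem eq_of_prefix_of_mem_sigmaW (hr : ∀ i, r i ∈ Icc (0 : ℝ) 1) (hR : 0 ≤ R)
    {u v : List (Fin N)} (hu : u ∈ SigmaW r R ε) (hv : v ∈ SigmaW r R ε) (huv : u <+: v) :
    u = v := by
  obtain ⟨s, rfl⟩ := huv
  rcases eq_or_ne s [] with rfl | hs
  · exact (List.append_nil u).symm
  · have hlt := (mem_sigmaW_iff.mp hu).2.1
    have hge := (mem_sigmaW_iff.mp hv).2.2
    rw [List.dropLast_append_of_ne_nil hs] at hge
    have := mul_le_mul_of_nonneg_left (rword_append_le hr u s.dropLast) hR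
    linarith

theorem exists_extension_mem_sigmaW (hr : ∀ i, r i ∈ Ioo (0 : ℝ) 1) (hR : 0 < R) (hε : 0 < ε)
    {ε' : ℝ} (hεε' : ε ≤ ε') (i : Fin N) {ω : List (Fin N)} (hω : ω ∈ SigmaW r R ε') :
    ∃ v ∈ SigmaW r R ε, ω <+: v := by
  obtain ⟨hne, -, hge⟩ := mem_sigmaW_iff.mp hω
  have hex : ∃ m, R * rword r (ω ++ List.replicate m i) < ε := by
    have hpos : 0 < R * rword r ω := mul_pos hR (rword_pos (fun i => (hr i).1) ω)
    obtain ⟨m, hm⟩ := exists_pow_lt_of_lt_one (div_pos hε hpos) (hr i).2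
    refine ⟨m, ?_⟩
    rw [rword_append, rword_replicate, ← mul_assoc]
    rwa [lt_div_iff₀' hpos] at hm
  refine ⟨ω ++ List.replicate (Nat.find hex) i, mem_sigmaW_iff.mpr
    ⟨by simp [hne], Nat.find_spec hex, ?_⟩, List.prefix_append _ _⟩
  -- the word before the last appended letter still has ratio at least `ε / R`, by minimality
  rcases hm : Nat.find hex with _ | k
  · simpa using hεε'.trans hge
  · rw [List.replicate_succ', ← List.append_assoc, List.dropLast_concat]
    exact not_lt.mp (Nat.find_min hex (hm ▸ k.lt_succ_self))

end SigmaW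

theorem stmt3_general {N : ℕ} (hN : 2 ≤ N) (r : Fin N → ℝ)
    (hr : ∀ i, r i ∈ Set.Ioo (0 : ℝ) 1) (R : ℝ) (hR : 0 < R)
    (ε ε' : ℝ) (hε : 0 < ε) (hεε' : ε ≤ ε') :
    (SigmaW r R ε).Finite ∧ (SigmaW r R ε').Finite ∧
      (SigmaW r R ε').ncard ≤ (SigmaW r R ε).ncard := by
  have : NeZero N := ⟨by omega⟩
  have hrIcc : ∀ i, r i ∈ Icc (0 : ℝ) 1 := fun i => Ioo_subset_Icc_self (hr i)
  have hfin := sigmaW_finite hr hR hε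
  refine ⟨hfin, sigmaW_finite hr hR (hε.trans_le hεε'), ?_⟩
  exact List.ncard_le_ncard_of_prefixFree hfin
    (fun u hu v hv => eq_of_prefix_of_mem_sigmaW hrIcc hR.le hu hv)
    (fun u hu => exists_extension_mem_sigmaW hr hR hε hεε' 0 hu)

/-- The cardinality of `Σ(·)` is monotone: for `0 < ε ≤ ε' ≤ R`, both `Σ(ε)` and `Σ(ε')`
are finite and `#Σ(ε') ≤ #Σ(ε)`. -/
theorem stmt3 {N : ℕ} (hN : 2 ≤ N) (r : Fin N → ℝ)
    (hr : ∀ i, r i ∈ Set.Ioo (0 : ℝ) 1) (D : ℝ) (hD0 : 0 ≤ D)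
    (hD : ∑ i, r i ^ D = 1) (R : ℝ) (hR : 0 < R)
    (ε ε' : ℝ) (hε : 0 < ε) (hεε' : ε ≤ ε') (hε'R : ε' ≤ R) :
    (SigmaW r R ε).Finite ∧ (SigmaW r R ε').Finite ∧
      (SigmaW r R ε').ncard ≤ (SigmaW r R ε).ncard :=
  stmt3_general hN r hr R hR ε ε' hε hεε'
end

section
/- At the critical value ε = g/2, the intersection of the parallel sets of the two cylinder sets is a scaled copy of the Cantor set C lying on the vertical line x = 1/2: (S_1 F)_{g/2} ∩ (S_2 F)_{g/2} = {(1/2, p·c) : c ∈ C}. -/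
open Set Metric

/-- The Cantor square `F = C × C ⊆ ℝ²`. -/
def cantorSquare (C : Set ℝ) : Set (EuclideanSpace ℝ (Fin 2)) :=
  {v | v 0 ∈ C ∧ v 1 ∈ C}

/-- The map `S₁(v) = p·v` on ℝ². -/
noncomputable def cantorS₁ (p : ℝ) (v : EuclideanSpace ℝ (Fin 2)) :
    EuclideanSpace ℝ (Fin 2) := p • v

/-- The map `S₂(v) = p·v + (1−p, 0)` on ℝ². -/
noncomputable def cantorS₂ (p : ℝ) (v : EuclideanSpace ℝ (Fin 2)) :
    EuclideanSpace ℝ (Fin 2) := p • v + EuclideanSpace.single 0 (1 - p)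

lemma cantor_basic (p : ℝ) (hp : p ∈ Set.Ioo (0 : ℝ) (1 / 2))
    (C : Set ℝ) (hCne : C.Nonempty) (hCcpt : IsCompact C)
    (hC : C = (fun x => p * x) '' C ∪ (fun x => p * x + (1 - p)) '' C) :
    (0 : ℝ) ∈ C ∧ (1 : ℝ) ∈ C ∧ C ⊆ Set.Icc 0 1 := by
  obtain ⟨hp0, hp2⟩ := hp
  set a := sInf C with ha
  set b := sSup C with hb
  have haC : a ∈ C := hCcpt.sInf_mem hCne
  have hbC : b ∈ C := hCcpt.sSup_mem hCne
  have hle : ∀ x ∈ C, a ≤ x ∧ x ≤ b := fun x hx =>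
    ⟨csInf_le hCcpt.bddBelow hx, le_csSup hCcpt.bddAbove hx⟩
  have hpa : p * a ∈ C := by rw [hC]; exact Or.inl ⟨a, haC, rfl⟩
  have hpb : p * b + (1 - p) ∈ C := by rw [hC]; exact Or.inr ⟨b, hbC, rfl⟩
  have ha0 : a ≤ 0 := by have := (hle _ hpa).1; nlinarith
  have hb1 : 1 ≤ b := by have := (hle _ hpb).2; nlinarith
  have haU := haC; rw [hC] at haU
  have ha' : a = 0 := by
    rcases haU with ⟨x, hx, hxe⟩ | ⟨x, hx, hxe⟩
    · have hxe' : p * x = a := hxe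
      have := (hle x hx).1
      nlinarith [mul_le_mul_of_nonneg_left this hp0.le]
    · have hxe' : p * x + (1 - p) = a := hxe
      have := (hle x hx).1
      nlinarith [mul_le_mul_of_nonneg_left this hp0.le]
  have hbU := hbC; rw [hC] at hbU
  have hb' : b = 1 := by
    rcases hbU with ⟨x, hx, hxe⟩ | ⟨x, hx, hxe⟩
    · have hxe' : p * x = b := hxe
      have := (hle x hx).2
      nlinarith [mul_le_mul_of_nonneg_left this hp0.le]
    · have hxe' : p * x + (1 - p) = b := hxe
      have := (hle x hx).2
      nlinarith [mul_le_mul_of_nonneg_left this hp0.le]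
  refine ⟨ha' ▸ haC, hb' ▸ hbC, fun x hx => ?_⟩
  obtain ⟨h1, h2⟩ := hle x hx
  exact ⟨by rw [ha'] at h1; linarith, by rw [hb'] at h2; linarith⟩

lemma cantorS₁_apply (p : ℝ) (v : EuclideanSpace ℝ (Fin 2)) (i : Fin 2) :
    cantorS₁ p v i = p * v i := rfl

lemma cantorS₂_apply0 (p : ℝ) (v : EuclideanSpace ℝ (Fin 2)) :
    cantorS₂ p v 0 = p * v 0 + (1 - p) := by
  simp [cantorS₂, EuclideanSpace.single_apply]

lemma cantorS₂_apply1 (p : ℝ) (v : EuclideanSpace ℝ (Fin 2)) :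
    cantorS₂ p v 1 = p * v 1 := by
  simp [cantorS₂, EuclideanSpace.single_apply]

lemma sq_le_interval {X d : ℝ} (hd : 0 ≤ d) (h : X ^ 2 ≤ d ^ 2) : -d ≤ X ∧ X ≤ d :=
  ⟨by nlinarith, by nlinarith⟩

lemma dist_two (x y : EuclideanSpace ℝ (Fin 2)) :
    dist x y = Real.sqrt ((x 0 - y 0) ^ 2 + (x 1 - y 1) ^ 2) := by
  rw [EuclideanSpace.dist_eq, Fin.sum_univ_two]
  simp [Real.dist_eq, sq_abs]

lemma cantorSquare_isCompact {C : Set ℝ} (hCcpt : IsCompact C) :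
    IsCompact (cantorSquare C) := by
  have h1 : IsCompact (Set.univ.pi fun _ : Fin 2 => C) := isCompact_univ_pi fun _ => hCcpt
  have h2 : cantorSquare C =
      (EuclideanSpace.equiv (Fin 2) ℝ).toHomeomorph ⁻¹' (Set.univ.pi fun _ : Fin 2 => C) := by
    ext v
    simp only [cantorSquare, Set.mem_setOf_eq, Set.mem_preimage, Set.mem_univ_pi,
      Fin.forall_fin_two]
    rfl
  rw [h2]
  exact (EuclideanSpace.equiv (Fin 2) ℝ).toHomeomorph.isCompact_preimage.mpr h1

/-- At the critical value `ε = g/2`, the intersection of the parallel sets of the two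
cylinder sets is the scaled copy `{(1/2, p·c) : c ∈ C}` of the Cantor set `C` on the
vertical line `x = 1/2`. -/
theorem stmt10 (p : ℝ) (hp : p ∈ Set.Ioo (0 : ℝ) (1 / 2))
    (C : Set ℝ) (hCne : C.Nonempty) (hCcpt : IsCompact C)
    (hC : C = (fun x => p * x) '' C ∪ (fun x => p * x + (1 - p)) '' C) :
    cthickening ((1 - 2 * p) / 2) (cantorS₁ p '' cantorSquare C) ∩
      cthickening ((1 - 2 * p) / 2) (cantorS₂ p '' cantorSquare C) =
      {v : EuclideanSpace ℝ (Fin 2) | v 0 = 1 / 2 ∧ ∃ c ∈ C, v 1 = p * c} := by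
  obtain ⟨h0C, h1C, hC01⟩ := cantor_basic p hp C hCne hCcpt hC
  obtain ⟨hp0, hp2⟩ := hp
  set δ := (1 - 2 * p) / 2 with hδdef
  have hδ0 : 0 ≤ δ := by simp only [hδdef]; linarith
  have hsq : IsCompact (cantorSquare C) := cantorSquare_isCompact hCcpt
  have hA : IsCompact (cantorS₁ p '' cantorSquare C) :=
    hsq.image (show Continuous fun v : EuclideanSpace ℝ (Fin 2) => p • v from
      continuous_const_smul p)
  have hB : IsCompact (cantorS₂ p '' cantorSquare C) :=
    hsq.image (show Continuous fun v : EuclideanSpace ℝ (Fin 2) =>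
      p • v + EuclideanSpace.single 0 (1 - p) from
      (continuous_const_smul p).add continuous_const)
  rw [hA.cthickening_eq_biUnion_closedBall hδ0, hB.cthickening_eq_biUnion_closedBall hδ0]
  ext v
  simp only [Set.mem_inter_iff, Set.mem_iUnion, Set.mem_setOf_eq, mem_closedBall,
    exists_prop, Set.mem_image]
  constructor
  · rintro ⟨⟨u, ⟨⟨w, ⟨hw0, hw1⟩, rfl⟩, hdu⟩⟩, ⟨u', ⟨⟨w', ⟨hw0', hw1'⟩, rfl⟩, hdu'⟩⟩⟩
    rw [dist_two] at hdu hdu'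
    rw [cantorS₁_apply, cantorS₁_apply] at hdu
    rw [cantorS₂_apply0, cantorS₂_apply1] at hdu'
    obtain ⟨hw0a, hw0b⟩ := hC01 hw0
    obtain ⟨hw1a, hw1b⟩ := hC01 hw1
    obtain ⟨hw0a', hw0b'⟩ := hC01 hw0'
    obtain ⟨hw1a', hw1b'⟩ := hC01 hw1'
    have hs1 : (v 0 - p * w 0) ^ 2 + (v 1 - p * w 1) ^ 2 ≤ δ ^ 2 := by
      have h := Real.sq_sqrt (by positivity : (0:ℝ) ≤ (v 0 - p * w 0) ^ 2 + (v 1 - p * w 1) ^ 2)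
      nlinarith [Real.sqrt_nonneg ((v 0 - p * w 0) ^ 2 + (v 1 - p * w 1) ^ 2)]
    have hs2 : (v 0 - (p * w' 0 + (1 - p))) ^ 2 + (v 1 - p * w' 1) ^ 2 ≤ δ ^ 2 := by
      have h := Real.sq_sqrt (by positivity :
        (0:ℝ) ≤ (v 0 - (p * w' 0 + (1 - p))) ^ 2 + (v 1 - p * w' 1) ^ 2)
      nlinarith [Real.sqrt_nonneg ((v 0 - (p * w' 0 + (1 - p))) ^ 2 + (v 1 - p * w' 1) ^ 2)]
    have hq1 : (v 0 - p * w 0) ^ 2 ≤ δ ^ 2 := by nlinarith [sq_nonneg (v 1 - p * w 1)]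
    have hq2 : (v 0 - (p * w' 0 + (1 - p))) ^ 2 ≤ δ ^ 2 := by
      nlinarith [sq_nonneg (v 1 - p * w' 1)]
    obtain ⟨hi1a, hi1b⟩ := sq_le_interval hδ0 hq1
    obtain ⟨hi2a, hi2b⟩ := sq_le_interval hδ0 hq2
    have hpw : p * w 0 ≤ p := by nlinarith
    have hpw' : 0 ≤ p * w' 0 := by positivity
    have hv0 : v 0 = 1 / 2 := by rw [hδdef] at hi1b hi2a; linarith
    refine ⟨hv0, w 1, hw1, ?_⟩
    have h1 : δ ≤ v 0 - p * w 0 := by rw [hv0, hδdef]; linarith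
    have hge : δ ^ 2 ≤ (v 0 - p * w 0) ^ 2 := pow_le_pow_left₀ hδ0 h1 2
    have hz : (v 1 - p * w 1) ^ 2 ≤ 0 := by linarith
    have hz' : (v 1 - p * w 1) ^ 2 = 0 := le_antisymm hz (sq_nonneg _)
    have := pow_eq_zero_iff (two_ne_zero) |>.mp hz'
    linarith
  · rintro ⟨hv0, c, hc, hv1⟩
    have h2p : (0:ℝ) ≤ 1 / 2 - p := by linarith
    constructor
    · set w : EuclideanSpace ℝ (Fin 2) := (WithLp.equiv 2 (Fin 2 → ℝ)).symm ![1, c] with hwdef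
      have e0 : w 0 = 1 := rfl
      have e1 : w 1 = c := rfl
      refine ⟨cantorS₁ p w, ⟨w, ⟨by rw [e0]; exact h1C, by rw [e1]; exact hc⟩, rfl⟩, ?_⟩
      rw [dist_two, cantorS₁_apply, cantorS₁_apply, e0, e1, hv0, hv1, hδdef]
      have : (1 / 2 - p * 1) ^ 2 + (p * c - p * c) ^ 2 = ((1 - 2 * p) / 2) ^ 2 := by ring
      rw [this, Real.sqrt_sq (by linarith)]
    · set w : EuclideanSpace ℝ (Fin 2) := (WithLp.equiv 2 (Fin 2 → ℝ)).symm ![0, c] with hwdef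
      have e0 : w 0 = 0 := rfl
      have e1 : w 1 = c := rfl
      refine ⟨cantorS₂ p w, ⟨w, ⟨by rw [e0]; exact h0C, by rw [e1]; exact hc⟩, rfl⟩, ?_⟩
      rw [dist_two, cantorS₂_apply0, cantorS₂_apply1, e0, e1, hv0, hv1, hδdef]
      have : (1 / 2 - (p * 0 + (1 - p))) ^ 2 + (p * c - p * c) ^ 2 = ((1 - 2 * p) / 2) ^ 2 := by
        ring
      rw [this, Real.sqrt_sq (by linarith)]
end

section
/- For every integer m ≥ 1 and every δ with (1−2p)p^m ≤ δ < (1−2p)p^{m−1}, the number of connected components of (0,1) ∖ C whose diameter is strictly greater than δ equals 2^m − 1. -/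
open Set Metric

/-- The set of connected components of `(0,1) ∖ C`. -/
def cantorGaps (C : Set ℝ) : Set (Set ℝ) :=
  {U | ∃ x ∈ Set.Ioo (0 : ℝ) 1 \ C, U = connectedComponentIn (Set.Ioo (0 : ℝ) 1 \ C) x}

/-!
The components of `(0,1) ∖ C` are exactly the images `f_w((p, 1 - p))` of the middle gap under
the compositions `f_w = f_{w₁} ∘ ⋯ ∘ f_{wₙ}`, one for each finite binary word `w`; they are
pairwise distinct and the one of `w` has length `(1 - 2p) p^|w|`. Hence the components longer than
`δ` correspond to the `1 + 2 + ⋯ + 2^{m-1} = 2^m - 1` words of length `< m`. Every point of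
`(0,1) ∖ C` lies in such a gap: outside the middle gap it is `f_b(y)` with `y ∈ [0,1]`, and a
`C`-free ball around it pulls back to a `C`-free ball around `y` that is `1/p` times larger,
which cannot go on forever.
-/

theorem ncard_setOf_length_eq {α : Type*} [Fintype α] (n : ℕ) :
    {w : List α | w.length = n}.ncard = Fintype.card α ^ n := by
  rw [← Nat.card_coe_set_eq, ← card_vector, ← Nat.card_eq_fintype_card]
  rfl

theorem ncard_setOf_length_lt (m : ℕ) :
    {w : List Bool | w.length < m}.ncard = 2 ^ m - 1 := by
  induction m with
  | zero => simp
  | succ m ih =>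
    have hsplit : {w : List Bool | w.length < m + 1} =
        {w : List Bool | w.length < m} ∪ {w : List Bool | w.length = m} := by
      ext w; simp only [mem_ofPred_eq, mem_union]; omega
    have hdisj : Disjoint {w : List Bool | w.length < m} {w : List Bool | w.length = m} :=
      disjoint_left.2 fun _ hlt heq => ne_of_lt hlt heq
    rw [hsplit, ncard_union_eq hdisj (List.finite_length_lt _ _) (List.finite_length_eq _ _),
      ih, ncard_setOf_length_eq, Fintype.card_bool]
    have := Nat.one_le_two_pow (n := m)
    rw [pow_succ]; omega

theorem connectedComponentIn_eq_Ioo {α : Type*} [ConditionallyCompleteLinearOrder α]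
    [TopologicalSpace α] [OrderTopology α] [DenselyOrdered α] {S : Set α} {a b x : α}
    (hS : Ioo a b ⊆ S) (ha : a ∉ S) (hb : b ∉ S) (hx : x ∈ Ioo a b) :
    connectedComponentIn S x = Ioo a b := by
  refine Subset.antisymm (fun y hy => ?_) (isPreconnected_Ioo.subset_connectedComponentIn hx hS)
  have hord := (isPreconnected_connectedComponentIn (F := S) (x := x)).ordConnected
  have hxS : x ∈ connectedComponentIn S x := mem_connectedComponentIn (hS hx)
  have hsub := connectedComponentIn_subset S x
  by_contra hy'
  rcases le_or_gt y a with hya | hay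
  · exact ha (hsub (hord.out hy hxS ⟨hya, hx.1.le⟩))
  · exact hb (hsub (hord.out hxS hy ⟨hx.2.le, not_lt.1 fun hyb => hy' ⟨hay, hyb⟩⟩))

namespace CantorSet

/-- `cantorMap p false` and `cantorMap p true` are the maps `f₁` and `f₂`. -/
def cantorMap (p : ℝ) (b : Bool) (x : ℝ) : ℝ := p * x + if b then 1 - p else 0

def cantorWordMap (p : ℝ) : List Bool → ℝ → ℝ
  | [], x => x
  | b :: w, x => cantorMap p b (cantorWordMap p w x)

def cantorGap (p : ℝ) (w : List Bool) : Set ℝ := cantorWordMap p w '' Ioo p (1 - p)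

variable {p : ℝ}

theorem dist_cantorMap (hp : 0 ≤ p) (b : Bool) (x y : ℝ) :
    dist (cantorMap p b x) (cantorMap p b y) = p * dist x y := by
  simp only [Real.dist_eq, cantorMap, add_sub_add_right_eq_sub, ← mul_sub, abs_mul,
    abs_of_nonneg hp]

theorem cantorWordMap_sub (w : List Bool) (x y : ℝ) :
    cantorWordMap p w x - cantorWordMap p w y = p ^ w.length * (x - y) := by
  induction w with
  | nil => simp [cantorWordMap]
  | cons b w ih =>
    simp only [cantorWordMap, cantorMap, add_sub_add_right_eq_sub, ← mul_sub, ih,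
      List.length_cons, pow_succ]
    ring

theorem image_cantorWordMap_Ioo (hp : 0 < p) (w : List Bool) (x y : ℝ) :
    cantorWordMap p w '' Ioo x y = Ioo (cantorWordMap p w x) (cantorWordMap p w y) := by
  induction w with
  | nil => simp [cantorWordMap]
  | cons b w ih =>
    change cantorMap p b ∘ cantorWordMap p w '' _ = _
    rw [image_comp, ih]
    exact image_affine_Ioo hp _ _ _

theorem cantorGap_cons (b : Bool) (w : List Bool) :
    cantorGap p (b :: w) = cantorMap p b '' cantorGap p w :=
  image_comp _ _ _

theorem cantorGap_eq_Ioo (hp : 0 < p) (w : List Bool) :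
    cantorGap p w = Ioo (cantorWordMap p w p) (cantorWordMap p w (1 - p)) :=
  image_cantorWordMap_Ioo hp w _ _

theorem diam_cantorGap (hp : 0 < p) (hp' : p < 1 / 2) (w : List Bool) :
    diam (cantorGap p w) = (1 - 2 * p) * p ^ w.length := by
  have hsub := cantorWordMap_sub (p := p) w (1 - p) p
  rw [cantorGap_eq_Ioo hp, Real.diam_Ioo (by nlinarith [pow_pos hp w.length]), hsub]
  ring

theorem lt_diam_cantorGap_iff (hp : 0 < p) (hp' : p < 1 / 2) {m : ℕ} {δ : ℝ}
    (hδ1 : (1 - 2 * p) * p ^ m ≤ δ) (hδ2 : δ < (1 - 2 * p) * p ^ (m - 1)) (w : List Bool) :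
    δ < diam (cantorGap p w) ↔ w.length < m := by
  have h2p : 0 < 1 - 2 * p := by linarith
  rw [diam_cantorGap hp hp']
  constructor
  · intro h
    by_contra! hmw
    have : p ^ w.length ≤ p ^ m := pow_le_pow_of_le_one hp.le (by linarith) hmw
    nlinarith
  · intro hwm
    have : p ^ (m - 1) ≤ p ^ w.length := pow_le_pow_of_le_one hp.le (by linarith) (by omega)
    nlinarith

theorem mapsTo_cantorWordMap {s : Set ℝ} (h : ∀ b, MapsTo (cantorMap p b) s s)
    (w : List Bool) : MapsTo (cantorWordMap p w) s s := by
  induction w with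
  | nil => exact mapsTo_id s
  | cons b w ih => exact (h b).comp ih

theorem mapsTo_cantorMap_Icc (hp : 0 ≤ p) (hp' : p ≤ 1) (b : Bool) :
    MapsTo (cantorMap p b) (Icc 0 1) (Icc 0 1) := by
  rintro x ⟨hx0, hx1⟩
  cases b <;> simp only [cantorMap, Bool.false_eq_true, if_false, if_true, mem_Icc] <;>
    constructor <;> nlinarith

theorem cantorMap_notMem_Ioo (hp : 0 ≤ p) (b : Bool) {x : ℝ} (hx : x ∈ Icc 0 1) :
    cantorMap p b x ∉ Ioo p (1 - p) := by
  obtain ⟨hx0, hx1⟩ := hx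
  rintro ⟨h1, h2⟩
  cases b <;> simp only [cantorMap, Bool.false_eq_true, if_false, if_true] at h1 h2 <;> nlinarith

theorem exists_cantorMap_eq (hp : 0 < p) {x : ℝ} (hx : x ∈ Icc 0 1) (hmid : x ∉ Ioo p (1 - p)) :
    ∃ b, ∃ y ∈ Icc (0 : ℝ) 1, cantorMap p b y = x := by
  obtain ⟨hx0, hx1⟩ := hx
  rcases le_or_gt x p with hxp | hxp
  · refine ⟨false, x / p, ⟨by positivity, (div_le_one hp).2 hxp⟩, ?_⟩
    simp [cantorMap, mul_div_cancel₀ _ hp.ne']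
  · have hxq : 1 - p ≤ x := not_lt.1 fun h => hmid ⟨hxp, h⟩
    refine ⟨true, (x - (1 - p)) / p, ⟨div_nonneg (by linarith) hp.le,
      (div_le_one hp).2 (by linarith)⟩, ?_⟩
    simp [cantorMap, mul_div_cancel₀ _ hp.ne']

theorem cantorMap_inj (hp : 0 < p) (hp' : p < 1 / 2) {b b' : Bool} {x y : ℝ}
    (hx : x ∈ Icc 0 1) (hy : y ∈ Icc 0 1) :
    cantorMap p b x = cantorMap p b' y ↔ b = b' ∧ x = y := by
  refine ⟨fun h => ?_, fun ⟨hb, hxy⟩ => hb ▸ hxy ▸ rfl⟩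
  obtain ⟨hx0, hx1⟩ := hx
  obtain ⟨hy0, hy1⟩ := hy
  cases b <;> cases b' <;> simp only [cantorMap, Bool.false_eq_true, if_false, if_true] at h <;>
    first
    | exact ⟨rfl, mul_left_cancel₀ hp.ne' (by linarith)⟩
    | exact absurd h (by nlinarith)

theorem cantorWordMap_inj (hp : 0 < p) (hp' : p < 1 / 2) {w w' : List Bool} {x y : ℝ}
    (hx : x ∈ Ioo p (1 - p)) (hy : y ∈ Ioo p (1 - p))
    (h : cantorWordMap p w x = cantorWordMap p w' y) : w = w' ∧ x = y := by
  have hIcc : ∀ {z}, z ∈ Ioo p (1 - p) → ∀ u, cantorWordMap p u z ∈ Icc (0 : ℝ) 1 :=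
    fun hz u => mapsTo_cantorWordMap (mapsTo_cantorMap_Icc hp.le (by linarith)) u
      ⟨by linarith [hz.1], by linarith [hz.2]⟩
  induction w generalizing w' with
  | nil =>
    cases w' with
    | nil => exact ⟨rfl, h⟩
    | cons b' u' =>
      have h' : x = cantorMap p b' (cantorWordMap p u' y) := h
      exact absurd (h' ▸ hx) (cantorMap_notMem_Ioo hp.le b' (hIcc hy u'))
  | cons b u ih =>
    cases w' with
    | nil =>
      have h' : cantorMap p b (cantorWordMap p u x) = y := h
      exact absurd (h' ▸ hy) (cantorMap_notMem_Ioo hp.le b (hIcc hx u))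
    | cons b' u' =>
      obtain ⟨rfl, hu⟩ := (cantorMap_inj hp hp' (hIcc hx u) (hIcc hy u')).1 h
      obtain ⟨rfl, rfl⟩ := ih hu
      exact ⟨rfl, rfl⟩

theorem cantorGap_injective (hp : 0 < p) (hp' : p < 1 / 2) : Function.Injective (cantorGap p) := by
  intro w w' h
  have hmid : 1 / 2 ∈ Ioo p (1 - p) := ⟨by linarith, by linarith⟩
  obtain ⟨y, hy, hxy⟩ : cantorWordMap p w (1 / 2) ∈ cantorGap p w' := h ▸ mem_image_of_mem _ hmid
  exact (cantorWordMap_inj hp hp' hy hmid hxy).1.symm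

section SelfSimilar

variable {C : Set ℝ} (hC : C = (fun x => p * x) '' C ∪ (fun x => p * x + (1 - p)) '' C)
include hC

theorem mem_iff_exists_cantorMap {x : ℝ} : x ∈ C ↔ ∃ b, ∃ y ∈ C, cantorMap p b y = x := by
  conv_lhs => rw [hC]
  simp [cantorMap, Bool.exists_bool]

theorem mapsTo_cantorMap (b : Bool) : MapsTo (cantorMap p b) C C :=
  fun y hy => (mem_iff_exists_cantorMap hC).2 ⟨b, y, hy, rfl⟩

theorem isGreatest_one (hp : 0 ≤ p) (hp' : p < 1) (hne : C.Nonempty) (hcpt : IsCompact C) :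
    IsGreatest C 1 := by
  obtain ⟨a, haC, hmax⟩ := hcpt.exists_isGreatest hne
  have h1a : 1 ≤ a := by
    have := hmax (mapsTo_cantorMap hC true haC)
    simp only [cantorMap, if_true] at this
    nlinarith
  obtain ⟨b, y, hy, rfl⟩ := (mem_iff_exists_cantorMap hC).1 haC
  have := hmax hy
  have ha1 : cantorMap p b y ≤ 1 := by
    cases b <;> simp only [cantorMap, Bool.false_eq_true, if_false, if_true] at this h1a ⊢ <;>
      nlinarith
  exact le_antisymm ha1 h1a ▸ ⟨haC, hmax⟩

theorem isLeast_zero (hp : 0 ≤ p) (hp' : p < 1) (hne : C.Nonempty) (hcpt : IsCompact C) :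
    IsLeast C 0 := by
  obtain ⟨a, haC, hmin⟩ := hcpt.exists_isLeast hne
  have ha0 : a ≤ 0 := by
    have := hmin (mapsTo_cantorMap hC false haC)
    simp only [cantorMap, Bool.false_eq_true, if_false] at this
    nlinarith
  obtain ⟨b, y, hy, rfl⟩ := (mem_iff_exists_cantorMap hC).1 haC
  have := hmin hy
  have h0a : 0 ≤ cantorMap p b y := by
    cases b <;> simp only [cantorMap, Bool.false_eq_true, if_false, if_true] at this ha0 ⊢ <;>
      nlinarith
  exact le_antisymm ha0 h0a ▸ ⟨haC, hmin⟩

theorem cantorMap_mem_iff (hp : 0 < p) (hp' : p < 1 / 2) (hCI : C ⊆ Icc 0 1) {b : Bool} {x : ℝ}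
    (hx : x ∈ Icc 0 1) : cantorMap p b x ∈ C ↔ x ∈ C := by
  refine ⟨fun h => ?_, fun h => mapsTo_cantorMap hC b h⟩
  obtain ⟨b', y, hy, hyx⟩ := (mem_iff_exists_cantorMap hC).1 h
  exact ((cantorMap_inj hp hp' (hCI hy) hx).1 hyx).2 ▸ hy

theorem cantorWordMap_mem_iff (hp : 0 < p) (hp' : p < 1 / 2) (hCI : C ⊆ Icc 0 1)
    (w : List Bool) {x : ℝ} (hx : x ∈ Icc 0 1) : cantorWordMap p w x ∈ C ↔ x ∈ C := by
  induction w with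
  | nil => rfl
  | cons b w ih =>
    exact (cantorMap_mem_iff hC hp hp' hCI
      (mapsTo_cantorWordMap (mapsTo_cantorMap_Icc hp.le (by linarith)) w hx)).trans ih

theorem notMem_of_mem_Ioo (hp : 0 ≤ p) (hCI : C ⊆ Icc 0 1) {x : ℝ} (hx : x ∈ Ioo p (1 - p)) :
    x ∉ C := fun h => by
  obtain ⟨b, y, hy, rfl⟩ := (mem_iff_exists_cantorMap hC).1 h
  exact cantorMap_notMem_Ioo hp b (hCI hy) hx

theorem cantorGap_subset (hp : 0 < p) (hp' : p < 1 / 2) (hCI : C ⊆ Icc 0 1) (h0 : 0 ∈ C)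
    (h1 : 1 ∈ C) (w : List Bool) : cantorGap p w ⊆ Ioo 0 1 \ C := by
  rintro _ ⟨t, ht, rfl⟩
  have ht01 : t ∈ Icc (0 : ℝ) 1 := ⟨by linarith [ht.1], by linarith [ht.2]⟩
  have hnot : cantorWordMap p w t ∉ C :=
    (cantorWordMap_mem_iff hC hp hp' hCI w ht01).not.2 (notMem_of_mem_Ioo hC hp.le hCI ht)
  obtain ⟨hge, hle⟩ := mapsTo_cantorWordMap (mapsTo_cantorMap_Icc hp.le (by linarith)) w ht01
  exact ⟨⟨hge.lt_of_ne fun h => hnot (h ▸ h0), hle.lt_of_ne fun h => hnot (h ▸ h1)⟩, hnot⟩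

theorem connectedComponentIn_eq_cantorGap (hp : 0 < p) (hp' : p < 1 / 2) (hCI : C ⊆ Icc 0 1)
    (h0 : 0 ∈ C) (h1 : 1 ∈ C) {w : List Bool} {x : ℝ} (hx : x ∈ cantorGap p w) :
    connectedComponentIn (Ioo 0 1 \ C) x = cantorGap p w := by
  have hends : ∀ {y}, y ∈ C → cantorWordMap p w y ∉ Ioo 0 1 \ C :=
    fun hy h => h.2 (mapsTo_cantorWordMap (mapsTo_cantorMap hC) w hy)
  have hpC : p ∈ C := by simpa [cantorMap] using mapsTo_cantorMap hC false h1
  have hqC : 1 - p ∈ C := by simpa [cantorMap] using mapsTo_cantorMap hC true h0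
  have hsub := cantorGap_subset hC hp hp' hCI h0 h1 w
  rw [cantorGap_eq_Ioo hp] at hx hsub ⊢
  exact connectedComponentIn_eq_Ioo hsub (hends hpC) (hends hqC) hx

theorem exists_mem_cantorGap (hp : 0 < p) (h1 : 1 ∈ C) (n : ℕ) {x : ℝ}
    (hx : x ∈ Icc 0 1) (hdisj : Disjoint (closedBall x (p ^ n)) C) :
    ∃ w, x ∈ cantorGap p w := by
  induction n generalizing x with
  | zero =>
    have h1x : (1 : ℝ) ∈ closedBall x (p ^ 0) := by
      rw [mem_closedBall, Real.dist_eq, pow_zero, abs_le]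
      constructor <;> linarith [hx.1, hx.2]
    exact absurd h1 (disjoint_left.1 hdisj h1x)
  | succ n ih =>
    by_cases hmid : x ∈ Ioo p (1 - p)
    · exact ⟨[], x, hmid, rfl⟩
    obtain ⟨b, y, hy, rfl⟩ := exists_cantorMap_eq hp hx hmid
    have hdisj' : Disjoint (closedBall y (p ^ n)) C := by
      refine disjoint_left.2 fun z hz hzC => disjoint_left.1 hdisj ?_ (mapsTo_cantorMap hC b hzC)
      rw [mem_closedBall, dist_cantorMap hp.le, pow_succ, mul_comm _ p]
      exact mul_le_mul_of_nonneg_left hz hp.le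
    obtain ⟨w, hw⟩ := ih hy hdisj'
    exact ⟨b :: w, cantorGap_cons b w ▸ mem_image_of_mem _ hw⟩

theorem cantorGaps_eq_range (hp : 0 < p) (hp' : p < 1 / 2) (hCI : C ⊆ Icc 0 1) (h0 : 0 ∈ C)
    (h1 : 1 ∈ C) (hclosed : IsClosed C) : cantorGaps C = range (cantorGap p) := by
  ext U
  constructor
  · rintro ⟨x, hx, rfl⟩
    obtain ⟨ε, hε, hball⟩ := Metric.isOpen_iff.1 hclosed.isOpen_compl x hx.2
    obtain ⟨n, hn⟩ := exists_pow_lt_of_lt_one hε (by linarith : p < 1)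
    have hdisj : Disjoint (closedBall x (p ^ n)) C :=
      subset_compl_iff_disjoint_right.1 ((closedBall_subset_ball hn).trans hball)
    obtain ⟨w, hw⟩ := exists_mem_cantorGap hC hp h1 n (Ioo_subset_Icc_self hx.1) hdisj
    exact ⟨w, (connectedComponentIn_eq_cantorGap hC hp hp' hCI h0 h1 hw).symm⟩
  · rintro ⟨w, rfl⟩
    have hx : cantorWordMap p w (1 / 2) ∈ cantorGap p w :=
      mem_image_of_mem _ ⟨by linarith, by linarith⟩
    exact ⟨_, cantorGap_subset hC hp hp' hCI h0 h1 w hx,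
      (connectedComponentIn_eq_cantorGap hC hp hp' hCI h0 h1 hx).symm⟩

end SelfSimilar

end CantorSet

open CantorSet

theorem stmt12_general (p : ℝ) (hp : p ∈ Set.Ioo (0 : ℝ) (1 / 2))
    (C : Set ℝ) (hCne : C.Nonempty) (hCcpt : IsCompact C)
    (hC : C = (fun x => p * x) '' C ∪ (fun x => p * x + (1 - p)) '' C)
    (m : ℕ) (δ : ℝ)
    (hδ1 : (1 - 2 * p) * p ^ m ≤ δ) (hδ2 : δ < (1 - 2 * p) * p ^ (m - 1)) :
    {U ∈ cantorGaps C | δ < Metric.diam U}.ncard = 2 ^ m - 1 := by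
  obtain ⟨hp0, hp⟩ := hp
  have h0 := isLeast_zero hC hp0.le (by linarith) hCne hCcpt
  have h1 := isGreatest_one hC hp0.le (by linarith) hCne hCcpt
  have hlarge : {U ∈ cantorGaps C | δ < diam U} = cantorGap p '' {w | w.length < m} := by
    rw [cantorGaps_eq_range hC hp0 hp (fun x hx => ⟨h0.2 hx, h1.2 hx⟩) h0.1 h1.1
      hCcpt.isClosed]
    ext U
    constructor
    · rintro ⟨⟨w, rfl⟩, hw⟩
      exact ⟨w, (lt_diam_cantorGap_iff hp0 hp hδ1 hδ2 w).1 hw, rfl⟩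
    · rintro ⟨w, hw, rfl⟩
      exact ⟨⟨w, rfl⟩, (lt_diam_cantorGap_iff hp0 hp hδ1 hδ2 w).2 hw⟩
  rw [hlarge, ncard_image_of_injective _ (cantorGap_injective hp0 hp), ncard_setOf_length_lt]

/-- For every `m ≥ 1` and `(1−2p)pᵐ ≤ δ < (1−2p)p^{m−1}`, the number of connected
components of `(0,1) ∖ C` of diameter strictly greater than `δ` equals `2ᵐ − 1`. -/
theorem stmt12 (p : ℝ) (hp : p ∈ Set.Ioo (0 : ℝ) (1 / 2))
    (C : Set ℝ) (hCne : C.Nonempty) (hCcpt : IsCompact C)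
    (hC : C = (fun x => p * x) '' C ∪ (fun x => p * x + (1 - p)) '' C)
    (m : ℕ) (hm : 1 ≤ m) (δ : ℝ)
    (hδ1 : (1 - 2 * p) * p ^ m ≤ δ) (hδ2 : δ < (1 - 2 * p) * p ^ (m - 1)) :
    {U ∈ cantorGaps C | δ < Metric.diam U}.ncard = 2 ^ m - 1 :=
  stmt12_general p hp C hCne hCcpt hC m δ hδ1 hδ2
end

section
/- Let c = 1/2 + (√3/6)·i ∈ ℂ and define S_1, S_2 : ℂ → ℂ by S_1(z) = c·conj(z) and S_2(z) = (1−c)·(conj(z) − 1) + 1 (the two similarities, each with contraction ratio 1/√3, generating the Koch curve). Let K ⊆ ℂ be a nonempty compact set with K = S_1(K) ∪ S_2(K). Then the strong open set condition holds: there exists a nonempty bounded open set O ⊆ ℂ with S_1(O) ∪ S_2(O) ⊆ O, S_1(O) ∩ S_2(O) = ∅, and O ∩ K ≠ ∅. -/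
open Complex

/-- The first Koch similarity `S₁(z) = c·conj(z)` with `c = 1/2 + (√3/6)i`. -/
noncomputable def kochS₁ (z : ℂ) : ℂ :=
  (1 / 2 + (Real.sqrt 3 / 6 : ℝ) * Complex.I) * (starRingEnd ℂ) z

/-- The second Koch similarity `S₂(z) = (1−c)·(conj(z) − 1) + 1`. -/
noncomputable def kochS₂ (z : ℂ) : ℂ :=
  (1 - (1 / 2 + (Real.sqrt 3 / 6 : ℝ) * Complex.I)) * ((starRingEnd ℂ) z - 1) + 1

/-!
The open set is the open triangle with vertices `0`, `1` and `c`: each `Sᵢ` maps it onto the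
open subtriangle on the `i`-th side of the line `re z = 1/2`, which gives invariance and
disjointness. Since `S₂` contracts towards its fixed point `1`, a point of `K` closest to `1`
must be `1` itself. Hence `K` contains `S₁ S₂ S₂ S₁ 1 = 4/9 + (√3/9) i`, which lies inside the
triangle.
-/

open Set

theorem IsCompact.mem_of_mapsTo_of_dist_le {X : Type*} [MetricSpace X] {K : Set X}
    (hK : IsCompact K) (hne : K.Nonempty) {f : X → X} (hf : MapsTo f K K) {p : X} {r : ℝ}
    (hr : r < 1) (hdist : ∀ x, dist (f x) p ≤ r * dist x p) : p ∈ K := by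
  obtain ⟨k, hk, hmin⟩ := hK.exists_isMinOn hne (continuous_id.dist continuous_const).continuousOn
  have hle : dist k p ≤ r * dist k p := (hmin (hf hk)).trans (hdist k)
  have hkp : dist k p = 0 := by nlinarith [dist_nonneg (x := k) (y := p)]
  rwa [dist_eq_zero.mp hkp] at hk

lemma kochS₁_re (z : ℂ) : (kochS₁ z).re = z.re / 2 + √3 / 6 * z.im := by
  simp only [kochS₁, mul_re, mul_im, add_re, add_im, conj_re, conj_im, ofReal_re, ofReal_im, I_re,
    I_im, one_re, one_im, div_ofNat_re, div_ofNat_im]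
  ring

lemma kochS₁_im (z : ℂ) : (kochS₁ z).im = √3 / 6 * z.re - z.im / 2 := by
  simp only [kochS₁, mul_re, mul_im, add_re, add_im, conj_re, conj_im, ofReal_re, ofReal_im, I_re,
    I_im, one_re, one_im, div_ofNat_re, div_ofNat_im]
  ring

lemma kochS₂_re (z : ℂ) : (kochS₂ z).re = z.re / 2 + 1 / 2 - √3 / 6 * z.im := by
  simp only [kochS₂, mul_re, mul_im, add_re, add_im, sub_re, sub_im, conj_re, conj_im, ofReal_re,
    ofReal_im, I_re, I_im, one_re, one_im, div_ofNat_re, div_ofNat_im]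
  ring

lemma kochS₂_im (z : ℂ) : (kochS₂ z).im = √3 / 6 * (1 - z.re) - z.im / 2 := by
  simp only [kochS₂, mul_re, mul_im, add_re, add_im, sub_re, sub_im, conj_re, conj_im, ofReal_re,
    ofReal_im, I_re, I_im, one_re, one_im, div_ofNat_re, div_ofNat_im]
  ring

lemma dist_kochS₂_one (z : ℂ) : dist (kochS₂ z) 1 = dist z 1 / √3 := by
  have h3 : √3 ^ 2 = 3 := Real.sq_sqrt (by norm_num)
  have hsq : dist (kochS₂ z) 1 ^ 2 = (dist z 1 / √3) ^ 2 := by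
    rw [div_pow, h3]
    simp only [dist_eq, Complex.sq_norm, normSq_apply, kochS₂_re, kochS₂_im, sub_re, sub_im,
      one_re, one_im]
    linear_combination ((z.re - 1) ^ 2 + z.im ^ 2) / 36 * h3
  exact (pow_left_inj₀ dist_nonneg (by positivity) two_ne_zero).mp hsq

def kochTriangle : Set ℂ := {z | 0 < z.im ∧ √3 * z.im < z.re ∧ √3 * z.im < 1 - z.re}

lemma isOpen_kochTriangle : IsOpen kochTriangle :=
  (isOpen_lt continuous_const continuous_im).inter
    ((isOpen_lt (continuous_const.mul continuous_im) continuous_re).inter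
      (isOpen_lt (continuous_const.mul continuous_im) (continuous_const.sub continuous_re)))

lemma kochTriangle_subset_ball : kochTriangle ⊆ Metric.ball 0 2 := by
  rintro z ⟨him, hre₀, hre₁⟩
  have hs : 0 < √3 := by positivity
  rw [mem_ball_zero_iff]
  calc ‖z‖ ≤ |z.re| + |z.im| := norm_le_abs_re_add_abs_im z
    _ < 2 := by
      rw [abs_of_pos (by nlinarith), abs_of_pos him]
      nlinarith [Real.sq_sqrt (show (0 : ℝ) ≤ 3 by norm_num)]

lemma isBounded_kochTriangle : Bornology.IsBounded kochTriangle :=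
  Metric.isBounded_ball.subset kochTriangle_subset_ball

lemma mapsTo_kochS₁_kochTriangle : MapsTo kochS₁ kochTriangle kochTriangle := by
  rintro z ⟨him, hre₀, hre₁⟩
  have h3 : √3 * √3 = 3 := Real.mul_self_sqrt (by norm_num)
  have hs : 0 < √3 := by positivity
  refine ⟨?_, ?_, ?_⟩ <;> simp only [kochS₁_re, kochS₁_im] <;> nlinarith [mul_pos hs him]

lemma mapsTo_kochS₂_kochTriangle : MapsTo kochS₂ kochTriangle kochTriangle := by
  rintro z ⟨him, hre₀, hre₁⟩
  have h3 : √3 * √3 = 3 := Real.mul_self_sqrt (by norm_num)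
  have hs : 0 < √3 := by positivity
  refine ⟨?_, ?_, ?_⟩ <;> simp only [kochS₂_re, kochS₂_im] <;> nlinarith [mul_pos hs him]

lemma kochS₁_re_lt_half {z : ℂ} (hz : z ∈ kochTriangle) : (kochS₁ z).re < 1 / 2 := by
  obtain ⟨him, hre₀, hre₁⟩ := hz
  rw [kochS₁_re]
  linarith [mul_pos (Real.sqrt_pos.mpr zero_lt_three) him]

lemma half_lt_kochS₂_re {z : ℂ} (hz : z ∈ kochTriangle) : 1 / 2 < (kochS₂ z).re := by
  obtain ⟨him, hre₀, hre₁⟩ := hz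
  rw [kochS₂_re]
  linarith [mul_pos (Real.sqrt_pos.mpr zero_lt_three) him]

lemma disjoint_kochS₁_image_kochS₂_image :
    Disjoint (kochS₁ '' kochTriangle) (kochS₂ '' kochTriangle) := by
  rw [Set.disjoint_iff]
  rintro _ ⟨⟨z₁, hz₁, rfl⟩, z₂, hz₂, heq⟩
  linarith [kochS₁_re_lt_half hz₁, half_lt_kochS₂_re hz₂, congrArg re heq]

lemma kochS₁_kochS₂_kochS₂_kochS₁_one :
    kochS₁ (kochS₂ (kochS₂ (kochS₁ 1))) = ⟨4 / 9, √3 / 9⟩ := by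
  have h3 : √3 ^ 2 = 3 := Real.sq_sqrt (by norm_num)
  apply Complex.ext <;>
    simp only [kochS₁_re, kochS₁_im, kochS₂_re, kochS₂_im, one_re, one_im]
  · linear_combination (√3 ^ 2 + 3) / 1296 * h3
  · linear_combination -√3 / 216 * h3

lemma kochS₁_kochS₂_kochS₂_kochS₁_one_mem_kochTriangle :
    kochS₁ (kochS₂ (kochS₂ (kochS₁ 1))) ∈ kochTriangle := by
  have h3 : √3 * √3 = 3 := Real.mul_self_sqrt (by norm_num)
  rw [kochS₁_kochS₂_kochS₂_kochS₁_one]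
  refine ⟨by positivity, ?_, ?_⟩ <;> dsimp only <;> nlinarith

/-- The Koch curve system satisfies the strong open set condition: there is a
nonempty bounded open set `O` with `S₁(O) ∪ S₂(O) ⊆ O`, `S₁(O) ∩ S₂(O) = ∅`
and `O ∩ K ≠ ∅`. -/
theorem stmt14 (K : Set ℂ) (hKne : K.Nonempty) (hKcpt : IsCompact K)
    (hK : K = kochS₁ '' K ∪ kochS₂ '' K) :
    ∃ O : Set ℂ, O.Nonempty ∧ IsOpen O ∧ Bornology.IsBounded O ∧
      kochS₁ '' O ∪ kochS₂ '' O ⊆ O ∧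
      kochS₁ '' O ∩ kochS₂ '' O = ∅ ∧
      (O ∩ K).Nonempty := by
  have hS₁K : MapsTo kochS₁ K K := fun z hz ↦ hK ▸ Or.inl (mem_image_of_mem _ hz)
  have hS₂K : MapsTo kochS₂ K K := fun z hz ↦ hK ▸ Or.inr (mem_image_of_mem _ hz)
  have h1K : (1 : ℂ) ∈ K :=
    hKcpt.mem_of_mapsTo_of_dist_le hKne hS₂K (r := 1 / √3)
      (by rw [div_lt_one (by positivity)]; exact Real.lt_sqrt_of_sq_lt (by norm_num))
      fun z ↦ by rw [dist_kochS₂_one, one_div_mul_eq_div]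
  have hz₀K := hS₁K (hS₂K (hS₂K (hS₁K h1K)))
  have hz₀O := kochS₁_kochS₂_kochS₂_kochS₁_one_mem_kochTriangle
  refine ⟨kochTriangle, ⟨_, hz₀O⟩, isOpen_kochTriangle, isBounded_kochTriangle,
    union_subset (image_subset_iff.mpr mapsTo_kochS₁_kochTriangle)
      (image_subset_iff.mpr mapsTo_kochS₂_kochTriangle),
    disjoint_kochS₁_image_kochS₂_image.inter_eq, ⟨_, hz₀O, hz₀K⟩⟩
end
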